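/- arXiv:2408.13706 — 6 statements merged into one kernel-verified Lean document; each statement's English description precedes it below -/
import Mathlib

section
/- Let f : ℝ → ℝ be a continuous probability density supported on [0,∞) with CDF F(x) = ∫₀^x f(p) dp, let α ∈ (0,1), τ ≥ 0, V ∈ ℝ, and let c : ℝ → ℝ be differentiable. Define the seller's expected non-integration profit u_s(e) = α·∫_{c(e)−τ}^{V−τ} (p + τ − c(e)) f(p) dp + α·(V − c(e))·(1 − F(V − τ)) − e. Then at any e with τ ≤ c(e) ≤ V, u_s is differentiable and u_s′(e) = −α·c′(e)·(1 − F(c(e) − τ)) − 1. In particular, any interior maximizer e^n of u_s satisfies the first-order condition −c′(e^n)·(1 − F(c(e^n) − τ)) = 1/α. -/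
open MeasureTheory

/-- Derivative of the seller's expected non-integration profit
`u_s(e) = α·∫_{c(e)−τ}^{V−τ} (p + τ − c(e)) f(p) dp + α(V − c(e))(1 − F(V−τ)) − e`:
at any `e` with `τ ≤ c(e) ≤ V` we have
`u_s′(e) = −α·c′(e)·(1 − F(c(e) − τ)) − 1`; in particular any interior
maximizer `e^n` satisfies `−c′(e^n)(1 − F(c(e^n) − τ)) = 1/α`. -/
theorem seller_profit_deriv_and_foc
    (f : ℝ → ℝ) (hf_cont : Continuous f) (hf_nonneg : ∀ p, 0 ≤ f p)
    (hf_supp : ∀ p, p < 0 → f p = 0)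
    (hf_int : IntegrableOn f (Set.Ici (0 : ℝ)))
    (hf_prob : ∫ p in Set.Ici (0 : ℝ), f p = 1)
    (F : ℝ → ℝ) (hF : ∀ x, F x = ∫ p in (0 : ℝ)..x, f p)
    (α τ V : ℝ) (hα : α ∈ Set.Ioo (0 : ℝ) 1) (hτ : 0 ≤ τ)
    (c : ℝ → ℝ) (hc : Differentiable ℝ c)
    (us : ℝ → ℝ)
    (hus : ∀ e, us e =
      α * (∫ p in (c e - τ)..(V - τ), (p + τ - c e) * f p)
        + α * (V - c e) * (1 - F (V - τ)) - e) :
    (∀ e, τ ≤ c e → c e ≤ V →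
        HasDerivAt us (-α * deriv c e * (1 - F (c e - τ)) - 1) e) ∧
      (∀ en, τ ≤ c en → c en ≤ V → IsLocalMax us en →
        -deriv c en * (1 - F (c en - τ)) = 1 / α) := by
  -- auxiliary antiderivatives
  set g : ℝ → ℝ := fun p => (p + τ) * f p with hg
  have hg_cont : Continuous g := by continuity
  set A : ℝ → ℝ := fun x => ∫ p in (0:ℝ)..x, g p with hA
  set B : ℝ → ℝ := fun x => ∫ p in (0:ℝ)..x, f p with hB
  -- rewrite us
  have hus' : ∀ e, us e =
      α * (A (V - τ) - A (c e - τ) - c e * (B (V - τ) - B (c e - τ)))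
        + α * (V - c e) * (1 - F (V - τ)) - e := by
    intro e
    rw [hus e]
    congr 2
    have hint : ∀ a b : ℝ, IntervalIntegrable f volume a b :=
      fun a b => hf_cont.intervalIntegrable a b
    have hintg : ∀ a b : ℝ, IntervalIntegrable g volume a b :=
      fun a b => hg_cont.intervalIntegrable a b
    have h1 : (∫ p in (c e - τ)..(V - τ), (p + τ - c e) * f p)
        = (∫ p in (c e - τ)..(V - τ), g p) - (∫ p in (c e - τ)..(V - τ), c e * f p) := by
      rw [← intervalIntegral.integral_sub (hintg _ _) ((hint _ _).const_mul _)]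
      congr 1; ext p; simp [hg]; ring
    rw [h1, intervalIntegral.integral_const_mul]
    have h2 : (∫ p in (c e - τ)..(V - τ), g p) = A (V - τ) - A (c e - τ) := by
      show _ = (∫ p in (0:ℝ)..(V - τ), g p) - ∫ p in (0:ℝ)..(c e - τ), g p
      exact (intervalIntegral.integral_interval_sub_left (hintg 0 _) (hintg 0 _)).symm
    have h3 : (∫ p in (c e - τ)..(V - τ), f p) = B (V - τ) - B (c e - τ) := by
      show _ = (∫ p in (0:ℝ)..(V - τ), f p) - ∫ p in (0:ℝ)..(c e - τ), f p
      exact (intervalIntegral.integral_interval_sub_left (hint 0 _) (hint 0 _)).symm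
    rw [h2, h3]
  have husfun : us = fun e =>
      α * (A (V - τ) - A (c e - τ) - c e * (B (V - τ) - B (c e - τ)))
        + α * (V - c e) * (1 - F (V - τ)) - e := funext hus'
  have key : ∀ e, HasDerivAt us (-α * deriv c e * (1 - F (c e - τ)) - 1) e := by
    intro e
    have hce : HasDerivAt c (deriv c e) e := (hc e).hasDerivAt
    have hceτ : HasDerivAt (fun x => c x - τ) (deriv c e) e := hce.sub_const τ
    have hAd : HasDerivAt A (g (c e - τ)) (c e - τ) :=
      (hg_cont.integral_hasStrictDerivAt 0 (c e - τ)).hasDerivAt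
    have hBd : HasDerivAt B (f (c e - τ)) (c e - τ) :=
      (hf_cont.integral_hasStrictDerivAt 0 (c e - τ)).hasDerivAt
    have hAc : HasDerivAt (fun x => A (c x - τ)) (g (c e - τ) * deriv c e) e :=
      by have := hAd.comp e hceτ; exact this
    have hBc : HasDerivAt (fun x => B (c x - τ)) (f (c e - τ) * deriv c e) e :=
      by have := hBd.comp e hceτ; exact this
    have h1 := hce.mul ((hasDerivAt_const e (B (V - τ))).sub hBc)
    have hleft := ((((hasDerivAt_const e (A (V - τ))).sub hAc).sub h1).const_mul α)
    have hmid := (((hasDerivAt_const e V).sub hce).const_mul α).mul_const (1 - F (V - τ))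
    have h2 := (hleft.add hmid).sub (hasDerivAt_id e)
    rw [husfun]
    convert h2 using 1
    · rfl
    · rfl
    · rfl
    have hBF : ∀ x, B x = F x := fun x => (hF x).symm
    have hgval : g (c e - τ) = c e * f (c e - τ) + (f (c e - τ)) * (-τ) + τ * f (c e - τ) := by
      simp only [hg]; ring
    rw [← hBF, ← hBF, hgval]
    simp only [Pi.sub_apply]
    ring
  constructor
  · intro e _ _; exact key e
  · intro en h1 h2 hmax
    have hd0 : deriv us en = 0 := hmax.deriv_eq_zero
    have := (key en).deriv
    rw [hd0] at this
    have hα0 : α ≠ 0 := ne_of_gt hα.1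
    field_simp
    nlinarith [this]
end

section
/- Let f : ℝ → ℝ be a continuous probability density supported on [0,∞) with CDF F(x) = ∫₀^x f(p) dp, let τ ≥ 0, V ∈ ℝ, and let c : ℝ → ℝ be differentiable. Define the integrated firm's expected profit u_v(e) = ∫₀^{c(e)−τ} (V − p − τ) f(p) dp + (V − c(e))·(1 − F(c(e) − τ)) − e. Then at any e with τ ≤ c(e) ≤ V, u_v is differentiable and u_v′(e) = −c′(e)·(1 − F(c(e) − τ)) − 1. In particular, any interior maximizer e^v of u_v satisfies the first-order condition −c′(e^v)·(1 − F(c(e^v) − τ)) = 1. -/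
open MeasureTheory

lemma hd_primitive (g : ℝ → ℝ) (hg : Continuous g) (x : ℝ) :
    HasDerivAt (fun y => ∫ t in (0:ℝ)..y, g t) (g x) x :=
  (intervalIntegral.integral_hasStrictDerivAt_right
    (hg.intervalIntegrable _ _) (hg.stronglyMeasurableAtFilter _ _)
    hg.continuousAt).hasDerivAt

/-- Derivative of the integrated firm's expected profit
`u_v(e) = ∫₀^{c(e)−τ} (V − p − τ) f(p) dp + (V − c(e))(1 − F(c(e)−τ)) − e`:
at any `e` with `τ ≤ c(e) ≤ V` we have
`u_v′(e) = −c′(e)·(1 − F(c(e) − τ)) − 1`; in particular any interior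
maximizer `e^v` satisfies `−c′(e^v)(1 − F(c(e^v) − τ)) = 1`. -/
theorem integrated_profit_deriv_and_foc
    (f : ℝ → ℝ) (hf_cont : Continuous f) (hf_nonneg : ∀ p, 0 ≤ f p)
    (hf_supp : ∀ p, p < 0 → f p = 0)
    (hf_int : IntegrableOn f (Set.Ici (0 : ℝ)))
    (hf_prob : ∫ p in Set.Ici (0 : ℝ), f p = 1)
    (F : ℝ → ℝ) (hF : ∀ x, F x = ∫ p in (0 : ℝ)..x, f p)
    (τ V : ℝ) (hτ : 0 ≤ τ)
    (c : ℝ → ℝ) (hc : Differentiable ℝ c)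
    (uv : ℝ → ℝ)
    (huv : ∀ e, uv e =
      (∫ p in (0 : ℝ)..(c e - τ), (V - p - τ) * f p)
        + (V - c e) * (1 - F (c e - τ)) - e) :
    (∀ e, τ ≤ c e → c e ≤ V →
        HasDerivAt uv (-deriv c e * (1 - F (c e - τ)) - 1) e) ∧
      (∀ ev, τ ≤ c ev → c ev ≤ V → IsLocalMax uv ev →
        -deriv c ev * (1 - F (c ev - τ)) = 1) := by
  have hFe : F = fun x => ∫ p in (0:ℝ)..x, f p := funext hF
  subst hFe
  have key : ∀ e, HasDerivAt uv
      (-deriv c e * (1 - ∫ p in (0:ℝ)..(c e - τ), f p) - 1) e := by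
    intro e
    have hce : HasDerivAt c (deriv c e) e := (hc e).hasDerivAt
    have hx : HasDerivAt (fun e => c e - τ) (deriv c e) e := hce.sub_const τ
    have hg : Continuous fun p => (V - p - τ) * f p := by continuity
    have h1 : HasDerivAt (fun e => ∫ p in (0:ℝ)..(c e - τ), (V - p - τ) * f p)
        ((V - (c e - τ) - τ) * f (c e - τ) * deriv c e) e :=
      by have := (hd_primitive _ hg (c e - τ)).comp e hx; exact this
    have hFd : HasDerivAt (fun e => ∫ p in (0:ℝ)..(c e - τ), f p)
        (f (c e - τ) * deriv c e) e :=
      by have := (hd_primitive _ hf_cont (c e - τ)).comp e hx; exact this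
    have h2 : HasDerivAt (fun e => (V - c e) * (1 - ∫ p in (0:ℝ)..(c e - τ), f p))
        ((0 - deriv c e) * (1 - ∫ p in (0:ℝ)..(c e - τ), f p)
          + (V - c e) * (0 - f (c e - τ) * deriv c e)) e :=
      ((hasDerivAt_const e V).sub hce).mul ((hasDerivAt_const e (1:ℝ)).sub hFd)
    have h3 : HasDerivAt (fun e : ℝ => e) 1 e := hasDerivAt_id e
    have H := (h1.add h2).sub h3
    have heq : uv = fun e =>
        (∫ p in (0:ℝ)..(c e - τ), (V - p - τ) * f p)
          + (V - c e) * (1 - ∫ p in (0:ℝ)..(c e - τ), f p) - e := funext huv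
    rw [heq]
    refine H.congr_deriv ?_
    ring
  refine ⟨fun e _ _ => key e, fun ev _ _ hmax => ?_⟩
  have h0 := hmax.hasDerivAt_eq_zero (key ev)
  linarith
end

section
/- (Equation (8)) Let f : ℝ → ℝ be a continuous probability density supported on [0,∞) with CDF F(x) = ∫₀^x f(p) dp, let α ∈ (0,1), τ ≥ 0, let c : ℝ → ℝ be continuously differentiable, let V : ℝ → ℝ be differentiable, and define W(e,t) = ∫₀^{c(e)−τ} (V(t) − p − τ) f(p) dp + (V(t) − c(e))·(1 − F(c(e) − τ)) − e. Let e^v, e^n : ℝ → ℝ be differentiable functions of the downstream tariff t, with τ ≤ c(e^v(t)) ≤ V(t) and τ ≤ c(e^n(t)) ≤ V(t), satisfying the first-order conditions −c′(e^v(t))·(1 − F(c(e^v(t)) − τ)) = 1 and −c′(e^n(t))·(1 − F(c(e^n(t)) − τ)) = 1/α for all t. Define ΔU(t) = W(e^v(t), t) − W(e^n(t), t). Then ΔU is differentiable and ΔU′(t) = −((1−α)/α)·(e^n)′(t). -/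
open MeasureTheory

/-- Equation (8): with `ΔU(t) = W(e^v(t), t) − W(e^n(t), t)` and first-order
conditions `−c′(e^v)(1 − F(c(e^v) − τ)) = 1`, `−c′(e^n)(1 − F(c(e^n) − τ)) = 1/α`,
the integration premium satisfies `ΔU′(t) = −((1−α)/α)·(e^n)′(t)`. -/
theorem integration_premium_deriv_downstream
    (f : ℝ → ℝ) (hf_cont : Continuous f) (hf_nonneg : ∀ p, 0 ≤ f p)
    (hf_supp : ∀ p, p < 0 → f p = 0)
    (hf_int : IntegrableOn f (Set.Ici (0 : ℝ)))
    (hf_prob : ∫ p in Set.Ici (0 : ℝ), f p = 1)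
    (F : ℝ → ℝ) (hF : ∀ x, F x = ∫ p in (0 : ℝ)..x, f p)
    (α τ : ℝ) (hα : α ∈ Set.Ioo (0 : ℝ) 1) (hτ : 0 ≤ τ)
    (c : ℝ → ℝ) (hc : ContDiff ℝ 1 c)
    (V : ℝ → ℝ) (hV : Differentiable ℝ V)
    (W : ℝ → ℝ → ℝ)
    (hW : ∀ e t, W e t = (∫ p in (0 : ℝ)..(c e - τ), (V t - p - τ) * f p)
        + (V t - c e) * (1 - F (c e - τ)) - e)
    (ev en : ℝ → ℝ) (hev : Differentiable ℝ ev) (hen : Differentiable ℝ en)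
    (hbv : ∀ t, τ ≤ c (ev t) ∧ c (ev t) ≤ V t)
    (hbn : ∀ t, τ ≤ c (en t) ∧ c (en t) ≤ V t)
    (hfocv : ∀ t, -deriv c (ev t) * (1 - F (c (ev t) - τ)) = 1)
    (hfocn : ∀ t, -deriv c (en t) * (1 - F (c (en t) - τ)) = 1 / α)
    (ΔU : ℝ → ℝ) (hΔU : ∀ t, ΔU t = W (ev t) t - W (en t) t) :
    ∀ t, HasDerivAt ΔU (-((1 - α) / α) * deriv en t) t := by
  obtain ⟨hα0, hα1⟩ := hα
  set G : ℝ → ℝ := fun y => ∫ p in (0:ℝ)..y, p * f p with hGdef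
  have hfc : Continuous fun p => p * f p := continuous_id.mul hf_cont
  have hFder : ∀ y, HasDerivAt F (f y) y := by
    intro y
    have h2 : F = fun x => ∫ p in (0:ℝ)..x, f p := funext hF
    rw [h2]
    exact (hf_cont.integral_hasStrictDerivAt 0 y).hasDerivAt
  have hGder : ∀ y, HasDerivAt G (y * f y) y := fun y =>
    (hfc.integral_hasStrictDerivAt 0 y).hasDerivAt
  have hΨ : ∀ y, HasDerivAt (fun y => G y + y * (1 - F y)) (1 - F y) y := by
    intro y
    have h2 : HasDerivAt (fun y => y * (1 - F y)) (1 * (1 - F y) + y * (0 - f y)) y :=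
      (hasDerivAt_id y).mul ((hasDerivAt_const y (1:ℝ)).sub (hFder y))
    have h3 := (hGder y).add h2
    exact h3.congr_deriv (by ring)
  -- rewrite ΔU in a V-free form
  have hDU : ΔU = fun t =>
      (G (c (en t) - τ) + (c (en t) - τ) * (1 - F (c (en t) - τ)) + en t)
      - (G (c (ev t) - τ) + (c (ev t) - τ) * (1 - F (c (ev t) - τ)) + ev t) := by
    funext t
    have hsplit : ∀ e : ℝ, (∫ p in (0:ℝ)..(c e - τ), (V t - p - τ) * f p)
        = (V t - τ) * F (c e - τ) - G (c e - τ) := by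
      intro e
      have h1 : (∫ p in (0:ℝ)..(c e - τ), (V t - p - τ) * f p)
          = ∫ p in (0:ℝ)..(c e - τ), ((V t - τ) * f p - p * f p) := by
        apply intervalIntegral.integral_congr
        intro p _; ring
      rw [h1, intervalIntegral.integral_sub
            (show IntervalIntegrable (fun p => (V t - τ) * f p) volume 0 (c e - τ) from
              (continuous_const.mul hf_cont).intervalIntegrable _ _)
            (hfc.intervalIntegrable _ _),
          intervalIntegral.integral_const_mul, ← hF]
    rw [hΔU, hW, hW, hsplit, hsplit]
    ring
  intro t
  rw [hDU]
  have hcd : Differentiable ℝ c := hc.differentiable one_ne_zero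
  have hyv : HasDerivAt (fun s => c (ev s) - τ) (deriv c (ev t) * deriv ev t) t :=
    ((hcd (ev t)).hasDerivAt.comp t (hev t).hasDerivAt).sub_const τ
  have hyn : HasDerivAt (fun s => c (en s) - τ) (deriv c (en t) * deriv en t) t :=
    ((hcd (en t)).hasDerivAt.comp t (hen t).hasDerivAt).sub_const τ
  have hΨv : HasDerivAt
      (fun s => G (c (ev s) - τ) + (c (ev s) - τ) * (1 - F (c (ev s) - τ)) + ev s)
      ((1 - F (c (ev t) - τ)) * (deriv c (ev t) * deriv ev t) + deriv ev t) t :=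
    by have := ((hΨ (c (ev t) - τ)).comp t hyv).add (hev t).hasDerivAt; exact this
  have hΨn : HasDerivAt
      (fun s => G (c (en s) - τ) + (c (en s) - τ) * (1 - F (c (en s) - τ)) + en s)
      ((1 - F (c (en t) - τ)) * (deriv c (en t) * deriv en t) + deriv en t) t :=
    by have := ((hΨ (c (en t) - τ)).comp t hyn).add (hen t).hasDerivAt; exact this
  have h := hΨn.sub hΨv
  refine h.congr_deriv ?_
  have hv := hfocv t
  have hn := hfocn t
  have hv' : deriv c (ev t) * (1 - F (c (ev t) - τ)) = -1 := by linarith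
  have hn' : deriv c (en t) * (1 - F (c (en t) - τ)) = -(1 / α) := by linarith
  have : (1 - F (c (ev t) - τ)) * (deriv c (ev t) * deriv ev t) + deriv ev t
      = (deriv c (ev t) * (1 - F (c (ev t) - τ)) + 1) * deriv ev t := by ring
  have h2 : (1 - F (c (en t) - τ)) * (deriv c (en t) * deriv en t) + deriv en t
      = (deriv c (en t) * (1 - F (c (en t) - τ)) + 1) * deriv en t := by ring
  rw [this, h2, hv', hn']
  have hα' : -(1 / α) + 1 = -((1 - α) / α) := by field_simp; ring
  rw [hα']; ring
end

section
/- (Equation (9)) Let f : ℝ → ℝ be a continuous probability density supported on [0,∞) with CDF F(x) = ∫₀^x f(p) dp, let α ∈ (0,1), V ∈ ℝ, let c : ℝ → ℝ be continuously differentiable, and define W(e,τ) = ∫₀^{c(e)−τ} (V − p − τ) f(p) dp + (V − c(e))·(1 − F(c(e) − τ)) − e. Let e^v, e^n be differentiable functions of the upstream tariff τ on an interval of τ > 0, with τ < c(e^v(τ)) ≤ V and τ < c(e^n(τ)) ≤ V, satisfying the first-order conditions −c′(e^v(τ))·(1 − F(c(e^v(τ)) − τ)) = 1 and −c′(e^n(τ))·(1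 − F(c(e^n(τ)) − τ)) = 1/α for all such τ. Define ΔU(τ) = W(e^v(τ), τ) − W(e^n(τ), τ). Then ΔU is differentiable and ΔU′(τ) = F(c(e^n(τ)) − τ) − F(c(e^v(τ)) − τ) − ((1−α)/α)·(e^n)′(τ). -/
open MeasureTheory

lemma W_comp_hasDerivAt
    (f : ℝ → ℝ) (hf_cont : Continuous f)
    (V : ℝ) (c : ℝ → ℝ) (hc : ContDiff ℝ 1 c)
    (e : ℝ → ℝ) (e' τ : ℝ) (he : HasDerivAt e e' τ) :
    HasDerivAt (fun t => (∫ p in (0:ℝ)..(c (e t) - t), (V - p - t) * f p)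
        + (V - c (e t)) * (1 - ∫ p in (0:ℝ)..(c (e t) - t), f p) - e t)
      (-(∫ p in (0:ℝ)..(c (e τ) - τ), f p)
        - (deriv c (e τ) * (1 - ∫ p in (0:ℝ)..(c (e τ) - τ), f p) + 1) * e') τ := by
  set A : ℝ → ℝ := fun x => ∫ p in (0:ℝ)..x, (V - p) * f p with hAdef
  set F0 : ℝ → ℝ := fun x => ∫ p in (0:ℝ)..x, f p with hF0def
  have hA : ∀ x, HasDerivAt A ((V - x) * f x) x := fun x =>
    (((continuous_const.sub continuous_id).mul hf_cont).integral_hasStrictDerivAt 0 x).hasDerivAt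
  have hF0 : ∀ x, HasDerivAt F0 (f x) x := fun x =>
    (hf_cont.integral_hasStrictDerivAt 0 x).hasDerivAt
  -- split the integral
  have hsplit : ∀ x t : ℝ, (∫ p in (0:ℝ)..x, (V - p - t) * f p) = A x - t * F0 x := by
    intro x t
    have step1 : (∫ p in (0:ℝ)..x, (V - p - t) * f p)
        = ∫ p in (0:ℝ)..x, ((V - p) * f p - t * f p) := by
      apply intervalIntegral.integral_congr
      intro p _
      ring
    have step2 : (∫ p in (0:ℝ)..x, ((V - p) * f p - t * f p))
        = (∫ p in (0:ℝ)..x, (V - p) * f p) - ∫ p in (0:ℝ)..x, t * f p :=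
      intervalIntegral.integral_sub
        (((continuous_const.sub continuous_id).mul hf_cont).intervalIntegrable 0 x)
        ((continuous_const.mul hf_cont).intervalIntegrable 0 x)
    rw [step1, step2, intervalIntegral.integral_const_mul]
  set c' := deriv c (e τ) with hc'def
  have hcd : HasDerivAt c c' (e τ) := ((hc.differentiable one_ne_zero) (e τ)).hasDerivAt
  have hce : HasDerivAt (fun t => c (e t)) (c' * e') τ := hcd.comp τ he
  have hu : HasDerivAt (fun t => c (e t) - t) (c' * e' - 1) τ := hce.sub (hasDerivAt_id τ)
  set u := c (e τ) - τ with hudef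
  have h1 : HasDerivAt (fun t => A (c (e t) - t)) ((V - u) * f u * (c' * e' - 1)) τ :=
    by have := (hA u).comp τ hu; exact this
  have hFu : HasDerivAt (fun t => F0 (c (e t) - t)) (f u * (c' * e' - 1)) τ :=
    by have := (hF0 u).comp τ hu; exact this
  have h2 : HasDerivAt (fun t => t * F0 (c (e t) - t))
      (1 * F0 u + τ * (f u * (c' * e' - 1))) τ := (hasDerivAt_id τ).mul hFu
  have h3 : HasDerivAt (fun t => (V - c (e t)) * (1 - F0 (c (e t) - t)))
      ((0 - c' * e') * (1 - F0 u) + (V - c (e τ)) * (0 - f u * (c' * e' - 1))) τ :=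
    ((hasDerivAt_const τ V).sub hce).mul ((hasDerivAt_const τ 1).sub hFu)
  have hsum : HasDerivAt
      (fun t => A (c (e t) - t) - t * F0 (c (e t) - t)
        + (V - c (e t)) * (1 - F0 (c (e t) - t)) - e t)
      ((V - u) * f u * (c' * e' - 1) - (1 * F0 u + τ * (f u * (c' * e' - 1)))
        + ((0 - c' * e') * (1 - F0 u) + (V - c (e τ)) * (0 - f u * (c' * e' - 1))) - e') τ :=
    ((h1.sub h2).add h3).sub he
  have hfun : (fun t => (∫ p in (0:ℝ)..(c (e t) - t), (V - p - t) * f p)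
        + (V - c (e t)) * (1 - ∫ p in (0:ℝ)..(c (e t) - t), f p) - e t)
      = fun t => A (c (e t) - t) - t * F0 (c (e t) - t)
        + (V - c (e t)) * (1 - F0 (c (e t) - t)) - e t := by
    funext t
    rw [hsplit]
  rw [hfun]
  convert hsum using 1
  rw [hudef]
  ring

/-- Equation (9): with `ΔU(τ) = W(e^v(τ), τ) − W(e^n(τ), τ)` on an interval of
`τ > 0`, the integration premium satisfies
`ΔU′(τ) = F(c(e^n(τ)) − τ) − F(c(e^v(τ)) − τ) − ((1−α)/α)·(e^n)′(τ)`. -/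
theorem integration_premium_deriv_upstream
    (f : ℝ → ℝ) (hf_cont : Continuous f) (hf_nonneg : ∀ p, 0 ≤ f p)
    (hf_supp : ∀ p, p < 0 → f p = 0)
    (hf_int : IntegrableOn f (Set.Ici (0 : ℝ)))
    (hf_prob : ∫ p in Set.Ici (0 : ℝ), f p = 1)
    (F : ℝ → ℝ) (hF : ∀ x, F x = ∫ p in (0 : ℝ)..x, f p)
    (α V : ℝ) (hα : α ∈ Set.Ioo (0 : ℝ) 1)
    (c : ℝ → ℝ) (hc : ContDiff ℝ 1 c)
    (W : ℝ → ℝ → ℝ)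
    (hW : ∀ e τ, W e τ = (∫ p in (0 : ℝ)..(c e - τ), (V - p - τ) * f p)
        + (V - c e) * (1 - F (c e - τ)) - e)
    (a b : ℝ) (ha : 0 ≤ a)
    (ev en : ℝ → ℝ)
    (hev : ∀ τ ∈ Set.Ioo a b, DifferentiableAt ℝ ev τ)
    (hen : ∀ τ ∈ Set.Ioo a b, DifferentiableAt ℝ en τ)
    (hbv : ∀ τ ∈ Set.Ioo a b, τ < c (ev τ) ∧ c (ev τ) ≤ V)
    (hbn : ∀ τ ∈ Set.Ioo a b, τ < c (en τ) ∧ c (en τ) ≤ V)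
    (hfocv : ∀ τ ∈ Set.Ioo a b, -deriv c (ev τ) * (1 - F (c (ev τ) - τ)) = 1)
    (hfocn : ∀ τ ∈ Set.Ioo a b, -deriv c (en τ) * (1 - F (c (en τ) - τ)) = 1 / α)
    (ΔU : ℝ → ℝ) (hΔU : ∀ τ, ΔU τ = W (ev τ) τ - W (en τ) τ) :
    ∀ τ ∈ Set.Ioo a b,
      HasDerivAt ΔU
        (F (c (en τ) - τ) - F (c (ev τ) - τ) - ((1 - α) / α) * deriv en τ) τ := by
  intro τ hτ
  have hα0 : (α : ℝ) ≠ 0 := ne_of_gt hα.1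
  have hv := (hev τ hτ).hasDerivAt
  have hn := (hen τ hτ).hasDerivAt
  have Hv := W_comp_hasDerivAt f hf_cont V c hc ev (deriv ev τ) τ hv
  have Hn := W_comp_hasDerivAt f hf_cont V c hc en (deriv en τ) τ hn
  have hΔfun : ΔU = fun t => ((∫ p in (0:ℝ)..(c (ev t) - t), (V - p - t) * f p)
        + (V - c (ev t)) * (1 - ∫ p in (0:ℝ)..(c (ev t) - t), f p) - ev t)
      - ((∫ p in (0:ℝ)..(c (en t) - t), (V - p - t) * f p)
        + (V - c (en t)) * (1 - ∫ p in (0:ℝ)..(c (en t) - t), f p) - en t) := by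
    funext t
    rw [hΔU, hW, hW, hF, hF]
  rw [hΔfun]
  have H := Hv.sub Hn
  convert H using 1
  case e'_4 => rfl
  case e'_5 => rfl
  case e'_8 => rfl
  rw [← hF, ← hF]
  have h1 : deriv c (ev τ) * (1 - F (c (ev τ) - τ)) = -1 := by
    have := hfocv τ hτ; linarith [this]
  have h2 : deriv c (en τ) * (1 - F (c (en τ) - τ)) = -(1 / α) := by
    have := hfocn τ hτ; linarith [this]
  rw [h1, h2]
  field_simp
  ring
end

section
/- (Hypothesis 1, model version) Under the hypotheses of equation (8) — f a continuous probability density supported on [0,∞) with CDF F, α ∈ (0,1), τ ≥ 0, c continuously differentiable, V differentiable, W(e,t) = ∫₀^{c(e)−τ} (V(t) − p − τ) f(p) dp + (V(t) − c(e))·(1 − F(c(e) − τ)) − e, and differentiable selections e^v(t), e^n(t) with τ ≤ c(e^v(t)) ≤ V(t), τ ≤ c(e^n(t)) ≤ V(t) satisfying −c′(e^v(t))(1 − F(c(e^v(t)) − τ)) = 1 and −c′(e^n(t))(1 − F(c(e^n(t)) − τ)) = 1/α — suppose additionally that (e^n)′(t) > 0 at some t. Then the integration premium ΔU(t) = W(e^v(t),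 t) − W(e^n(t), t) satisfies ΔU′(t) < 0 at that t; that is, a reduction in the downstream tariff t strictly increases the gain from vertical integration. -/
open MeasureTheory

private lemma ftc_aux (g : ℝ → ℝ) (hg : Continuous g) (x : ℝ) :
    HasDerivAt (fun u => ∫ p in (0:ℝ)..u, g p) (g x) x :=
  intervalIntegral.integral_hasDerivAt_right (hg.intervalIntegrable _ _)
    (hg.stronglyMeasurableAtFilter _ _) hg.continuousAt

/-- Hypothesis 1 (model version): under the hypotheses of equation (8), if the
non-integration investment responds positively to the downstream tariff at
some `t` (`(e^n)′(t) > 0`), then the integration premium is strictly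
decreasing in `t` there: `ΔU′(t) < 0`. -/
theorem lower_downstream_tariff_raises_integration_premium
    (f : ℝ → ℝ) (hf_cont : Continuous f) (hf_nonneg : ∀ p, 0 ≤ f p)
    (hf_supp : ∀ p, p < 0 → f p = 0)
    (hf_int : IntegrableOn f (Set.Ici (0 : ℝ)))
    (hf_prob : ∫ p in Set.Ici (0 : ℝ), f p = 1)
    (F : ℝ → ℝ) (hF : ∀ x, F x = ∫ p in (0 : ℝ)..x, f p)
    (α τ : ℝ) (hα : α ∈ Set.Ioo (0 : ℝ) 1) (hτ : 0 ≤ τ)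
    (c : ℝ → ℝ) (hc : ContDiff ℝ 1 c)
    (V : ℝ → ℝ) (hV : Differentiable ℝ V)
    (W : ℝ → ℝ → ℝ)
    (hW : ∀ e t, W e t = (∫ p in (0 : ℝ)..(c e - τ), (V t - p - τ) * f p)
        + (V t - c e) * (1 - F (c e - τ)) - e)
    (ev en : ℝ → ℝ) (hev : Differentiable ℝ ev) (hen : Differentiable ℝ en)
    (hbv : ∀ t, τ ≤ c (ev t) ∧ c (ev t) ≤ V t)
    (hbn : ∀ t, τ ≤ c (en t) ∧ c (en t) ≤ V t)
    (hfocv : ∀ t, -deriv c (ev t) * (1 - F (c (ev t) - τ)) = 1)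
    (hfocn : ∀ t, -deriv c (en t) * (1 - F (c (en t) - τ)) = 1 / α)
    (ΔU : ℝ → ℝ) (hΔU : ∀ t, ΔU t = W (ev t) t - W (en t) t)
    (t : ℝ) (hresp : 0 < deriv en t) :
    DifferentiableAt ℝ ΔU t ∧ deriv ΔU t < 0 := by
  set H : ℝ → ℝ := fun x => ∫ p in (0:ℝ)..x, p * f p with hHdef
  have hfc : Continuous fun p => p * f p := continuous_id.mul hf_cont
  have hF' : ∀ x, HasDerivAt F (f x) x := by
    intro x
    have hFe : F = fun u => ∫ p in (0:ℝ)..u, f p := funext hF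
    rw [hFe]
    exact ftc_aux f hf_cont x
  have hH' : ∀ x, HasDerivAt H (x * f x) x := fun x => ftc_aux _ hfc x
  -- rewrite W in terms of F and H
  have hWeq : ∀ e s, W e s = (V s - τ) * F (c e - τ) - H (c e - τ)
      + (V s - c e) * (1 - F (c e - τ)) - e := by
    intro e s
    rw [hW]
    have h1 : (∫ p in (0:ℝ)..(c e - τ), (V s - p - τ) * f p)
        = (V s - τ) * (∫ p in (0:ℝ)..(c e - τ), f p)
          - ∫ p in (0:ℝ)..(c e - τ), p * f p := by
      rw [← intervalIntegral.integral_const_mul, ← intervalIntegral.integral_sub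
        (by have hcm : Continuous fun p => (V s - τ) * f p := continuous_const.mul hf_cont; exact hcm.intervalIntegrable _ _) (hfc.intervalIntegrable _ _)]
      apply intervalIntegral.integral_congr
      intro p _
      ring
    rw [h1, ← hF (c e - τ)]
  -- key derivative computation along a differentiable path
  have key : ∀ (e : ℝ → ℝ), Differentiable ℝ e →
      HasDerivAt (fun s => W (e s) s)
        (deriv V t + (-deriv c (e t) * (1 - F (c (e t) - τ)) - 1) * deriv e t) t := by
    intro e he
    have hfun : (fun s => W (e s) s) = fun s =>
        (V s - τ) * F (c (e s) - τ) - H (c (e s) - τ)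
          + (V s - c (e s)) * (1 - F (c (e s) - τ)) - e s :=
      funext fun s => hWeq (e s) s
    rw [hfun]
    have hce : HasDerivAt (fun s => c (e s)) (deriv c (e t) * deriv e t) t :=
      (hc.differentiable one_ne_zero (e t)).hasDerivAt.comp t (he t).hasDerivAt
    have hx : HasDerivAt (fun s => c (e s) - τ) (deriv c (e t) * deriv e t) t :=
      hce.sub_const τ
    have hFx : HasDerivAt (fun s => F (c (e s) - τ))
        (f (c (e t) - τ) * (deriv c (e t) * deriv e t)) t := (hF' _).comp t hx
    have hHx : HasDerivAt (fun s => H (c (e s) - τ))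
        ((c (e t) - τ) * f (c (e t) - τ) * (deriv c (e t) * deriv e t)) t :=
      (hH' _).comp t hx
    have hVt : HasDerivAt V (deriv V t) t := (hV t).hasDerivAt
    have h1 : HasDerivAt (fun s => (V s - τ) * F (c (e s) - τ))
        (deriv V t * F (c (e t) - τ)
          + (V t - τ) * (f (c (e t) - τ) * (deriv c (e t) * deriv e t))) t :=
      (hVt.sub_const τ).mul hFx
    have h2 : HasDerivAt (fun s => (V s - c (e s)) * (1 - F (c (e s) - τ)))
        ((deriv V t - deriv c (e t) * deriv e t) * (1 - F (c (e t) - τ))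
          + (V t - c (e t)) * (-(f (c (e t) - τ) * (deriv c (e t) * deriv e t)))) t :=
      (hVt.sub hce).mul (hFx.const_sub 1)
    have total := ((h1.sub hHx).add h2).sub (he t).hasDerivAt
    refine total.congr_deriv ?_
    ring
  have hv := key ev hev
  have hn := key en hen
  have hΔ : HasDerivAt ΔU
      ((deriv V t + (-deriv c (ev t) * (1 - F (c (ev t) - τ)) - 1) * deriv ev t)
        - (deriv V t + (-deriv c (en t) * (1 - F (c (en t) - τ)) - 1) * deriv en t)) t := by
    have hfun : ΔU = fun s => W (ev s) s - W (en s) s := funext hΔU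
    rw [hfun]
    exact hv.sub hn
  refine ⟨hΔ.differentiableAt, ?_⟩
  rw [hΔ.deriv, hfocv t, hfocn t]
  have hα1 : 1 < 1 / α := one_lt_one_div hα.1 hα.2
  nlinarith [mul_pos (sub_pos.mpr hα1) hresp]
end

section
/- (Hypothesis 2, model version) Under the hypotheses of equation (9) — f a continuous probability density supported on [0,∞) with CDF F, α ∈ (0,1), V ∈ ℝ, c continuously differentiable, W(e,τ) = ∫₀^{c(e)−τ} (V − p − τ) f(p) dp + (V − c(e))·(1 − F(c(e) − τ)) − e, and differentiable selections e^v(τ), e^n(τ) with τ < c(e^v(τ)) ≤ V, τ < c(e^n(τ)) ≤ V satisfying −c′(e^v(τ))(1 − F(c(e^v(τ)) − τ)) = 1 and −c′(e^n(τ))(1 − F(c(e^n(τ)) − τ)) = 1/α — suppose additionally that at some τ the investment-response effect dominates the sourcing-substitution effect: ((1−α)/α)·(e^n)′(τ) > F(c(e^n(τ)) − τ) − F(c(e^v(τ)) − τ). Then the integration premium ΔU(τ) = W(e^v(τ), τ) − W(e^n(τ), τ) satisfies ΔU′(τ) < 0 at that τ; that is, a reduction in the upstream tariff τ strictly increases the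 gain from vertical integration. -/
open MeasureTheory

/-- Derivative of `τ ↦ W (e τ) τ` for the bargaining payoff `W`. -/
lemma hasDerivAt_W_comp
    (f : ℝ → ℝ) (hf_cont : Continuous f)
    (F : ℝ → ℝ) (hF : ∀ x, F x = ∫ p in (0 : ℝ)..x, f p)
    (V : ℝ) (c : ℝ → ℝ) (hc : ContDiff ℝ 1 c)
    (W : ℝ → ℝ → ℝ)
    (hW : ∀ e τ, W e τ = (∫ p in (0 : ℝ)..(c e - τ), (V - p - τ) * f p)
        + (V - c e) * (1 - F (c e - τ)) - e)
    (e : ℝ → ℝ) (τ0 : ℝ) (he : DifferentiableAt ℝ e τ0) :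
    HasDerivAt (fun τ => W (e τ) τ)
      (-F (c (e τ0) - τ0)
        + deriv e τ0 * (-deriv c (e τ0) * (1 - F (c (e τ0) - τ0)) - 1)) τ0 := by
  set G : ℝ → ℝ := fun x => ∫ p in (0 : ℝ)..x, (V - p) * f p with hG
  have hg_cont : Continuous fun p => (V - p) * f p := by fun_prop
  have hFd : ∀ x, HasDerivAt F (f x) x := by
    intro x
    have : HasDerivAt (fun y => ∫ p in (0:ℝ)..y, f p) (f x) x :=
      intervalIntegral.integral_hasDerivAt_right (hf_cont.intervalIntegrable 0 x)
        (hf_cont.stronglyMeasurableAtFilter _ _) hf_cont.continuousAt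
    exact this.congr_deriv rfl |>.congr_of_eventuallyEq
      (Filter.Eventually.of_forall fun y => (hF y))
  have hGd : ∀ x, HasDerivAt G ((V - x) * f x) x := fun x =>
    intervalIntegral.integral_hasDerivAt_right (hg_cont.intervalIntegrable 0 x)
      (hg_cont.stronglyMeasurableAtFilter _ _) hg_cont.continuousAt
  -- rewrite W
  have hWeq : (fun τ => W (e τ) τ) = fun τ =>
      G (c (e τ) - τ) - τ * F (c (e τ) - τ)
        + (V - c (e τ)) * (1 - F (c (e τ) - τ)) - e τ := by
    funext τ
    rw [hW]
    congr 1
    congr 1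
    have h1 : ∀ p, (V - p - τ) * f p = (V - p) * f p - τ * f p := by intro p; ring
    simp_rw [h1]
    rw [intervalIntegral.integral_sub (hg_cont.intervalIntegrable _ _)
        ((show Continuous fun p => τ * f p by fun_prop).intervalIntegrable _ _),
      intervalIntegral.integral_const_mul, hF]
  rw [hWeq]
  set x0 : ℝ := c (e τ0) - τ0 with hx0
  have hcd : ∀ y, HasDerivAt c (deriv c y) y := fun y =>
    ((hc.differentiable one_ne_zero) y).hasDerivAt
  have he' : HasDerivAt e (deriv e τ0) τ0 := he.hasDerivAt
  have hx : HasDerivAt (fun τ => c (e τ) - τ)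
      (deriv c (e τ0) * deriv e τ0 - 1) τ0 :=
    ((hcd (e τ0)).comp τ0 he').sub (hasDerivAt_id τ0)
  have h1 : HasDerivAt (fun τ => G (c (e τ) - τ))
      ((V - x0) * f x0 * (deriv c (e τ0) * deriv e τ0 - 1)) τ0 :=
    by have := (hGd x0).comp τ0 hx; exact this
  have hFc : HasDerivAt (fun τ => F (c (e τ) - τ))
      (f x0 * (deriv c (e τ0) * deriv e τ0 - 1)) τ0 := (hFd x0).comp τ0 hx
  have h2 : HasDerivAt (fun τ => τ * F (c (e τ) - τ))
      (1 * F x0 + τ0 * (f x0 * (deriv c (e τ0) * deriv e τ0 - 1))) τ0 :=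
    (hasDerivAt_id τ0).mul hFc
  have h3 : HasDerivAt (fun τ => (V - c (e τ)) * (1 - F (c (e τ) - τ)))
      ((0 - deriv c (e τ0) * deriv e τ0) * (1 - F x0)
        + (V - c (e τ0)) * (0 - f x0 * (deriv c (e τ0) * deriv e τ0 - 1))) τ0 :=
    ((hasDerivAt_const τ0 V).sub ((hcd (e τ0)).comp τ0 he')).mul
      ((hasDerivAt_const τ0 (1:ℝ)).sub hFc)
  have := ((h1.sub h2).add h3).sub he'
  refine this.congr_deriv ?_
  rw [hx0]
  ring

/-- Hypothesis 2 (model version): under the hypotheses of equation (9), if at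
some `τ₀` the investment-response effect dominates the sourcing-substitution
effect, `((1−α)/α)·(e^n)′(τ₀) > F(c(e^n(τ₀)) − τ₀) − F(c(e^v(τ₀)) − τ₀)`, then
the integration premium is strictly decreasing in the upstream tariff there:
`ΔU′(τ₀) < 0`. -/
theorem lower_upstream_tariff_raises_integration_premium
    (f : ℝ → ℝ) (hf_cont : Continuous f) (hf_nonneg : ∀ p, 0 ≤ f p)
    (hf_supp : ∀ p, p < 0 → f p = 0)
    (hf_int : IntegrableOn f (Set.Ici (0 : ℝ)))
    (hf_prob : ∫ p in Set.Ici (0 : ℝ), f p = 1)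
    (F : ℝ → ℝ) (hF : ∀ x, F x = ∫ p in (0 : ℝ)..x, f p)
    (α V : ℝ) (hα : α ∈ Set.Ioo (0 : ℝ) 1)
    (c : ℝ → ℝ) (hc : ContDiff ℝ 1 c)
    (W : ℝ → ℝ → ℝ)
    (hW : ∀ e τ, W e τ = (∫ p in (0 : ℝ)..(c e - τ), (V - p - τ) * f p)
        + (V - c e) * (1 - F (c e - τ)) - e)
    (a b : ℝ) (ha : 0 ≤ a)
    (ev en : ℝ → ℝ)
    (hev : ∀ τ ∈ Set.Ioo a b, DifferentiableAt ℝ ev τ)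
    (hen : ∀ τ ∈ Set.Ioo a b, DifferentiableAt ℝ en τ)
    (hbv : ∀ τ ∈ Set.Ioo a b, τ < c (ev τ) ∧ c (ev τ) ≤ V)
    (hbn : ∀ τ ∈ Set.Ioo a b, τ < c (en τ) ∧ c (en τ) ≤ V)
    (hfocv : ∀ τ ∈ Set.Ioo a b, -deriv c (ev τ) * (1 - F (c (ev τ) - τ)) = 1)
    (hfocn : ∀ τ ∈ Set.Ioo a b, -deriv c (en τ) * (1 - F (c (en τ) - τ)) = 1 / α)
    (ΔU : ℝ → ℝ) (hΔU : ∀ τ, ΔU τ = W (ev τ) τ - W (en τ) τ)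
    (τ0 : ℝ) (hτ0 : τ0 ∈ Set.Ioo a b)
    (hdom : F (c (en τ0) - τ0) - F (c (ev τ0) - τ0)
        < ((1 - α) / α) * deriv en τ0) :
    DifferentiableAt ℝ ΔU τ0 ∧ deriv ΔU τ0 < 0 := by
  have hv := hasDerivAt_W_comp f hf_cont F hF V c hc W hW ev τ0 (hev τ0 hτ0)
  have hn := hasDerivAt_W_comp f hf_cont F hF V c hc W hW en τ0 (hen τ0 hτ0)
  have hΔ : HasDerivAt ΔU
      ((-F (c (ev τ0) - τ0)
          + deriv ev τ0 * (-deriv c (ev τ0) * (1 - F (c (ev τ0) - τ0)) - 1))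
        - (-F (c (en τ0) - τ0)
          + deriv en τ0 * (-deriv c (en τ0) * (1 - F (c (en τ0) - τ0)) - 1))) τ0 := by
    have := hv.sub hn
    exact this.congr_of_eventuallyEq (Filter.Eventually.of_forall fun τ => hΔU τ)
  refine ⟨hΔ.differentiableAt, ?_⟩
  rw [hΔ.deriv, hfocv τ0 hτ0, hfocn τ0 hτ0]
  have hα0 : (0:ℝ) < α := hα.1
  have key : 1 / α - 1 = (1 - α) / α := by field_simp
  have goal : -F (c (ev τ0) - τ0) + deriv ev τ0 * (1 - 1) -
      (-F (c (en τ0) - τ0) + deriv en τ0 * (1 / α - 1)) =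
      (F (c (en τ0) - τ0) - F (c (ev τ0) - τ0)) - ((1 - α) / α) * deriv en τ0 := by
    rw [key]; ring
  rw [goal]
  linarith [hdom]
end
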